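/- arXiv:2002.09744 — 2 statements merged into one kernel-verified Lean document; each statement's English description precedes it below -/
import Mathlib

section
/- Let K, σ, ω be real numbers with d := K − σ, and let A be the 3×3 real matrix with rows (−K + ω²d, 0, ωd), (0, −K, 0), (ωd, 0, −K + d). Then the characteristic polynomial of A equals (τ + K)²·(τ − λ) where λ = −σ + ω²(K − σ). Moreover λ = −K if and only if (1 + ω²)(K − σ) = 0; in particular if K ≠ σ then −K is an eigenvalue of multiplicity exactly 2 and λ is a simple eigenvalue. -/
open Polynomial

/-- Eigenvalue structure of the curvature matrix of (eq:ss11:hR): the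
characteristic polynomial is `(τ + K)²(τ − λ)` with `λ = −σ + ω²(K − σ)`;
`λ = −K` iff `(1 + ω²)(K − σ) = 0`, and if `K ≠ σ` then `−K` has algebraic
multiplicity exactly `2` while `λ` is a simple eigenvalue. -/
theorem curvature_matrix_eigenvalues_case_iv (K σ ω : ℝ) :
    let d := K - σ
    let A : Matrix (Fin 3) (Fin 3) ℝ :=
      !![-K + ω ^ 2 * d, 0, ω * d; 0, -K, 0; ω * d, 0, -K + d]
    let l := -σ + ω ^ 2 * (K - σ)
    A.charpoly = (X + C K) ^ 2 * (X - C l) ∧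
    (l = -K ↔ (1 + ω ^ 2) * (K - σ) = 0) ∧
    (K ≠ σ →
      A.charpoly.rootMultiplicity (-K) = 2 ∧ A.charpoly.rootMultiplicity l = 1) := by
  intro d A l
  have hcp : A.charpoly = (X + C K) ^ 2 * (X - C l) := by
    rw [Matrix.charpoly, Matrix.det_fin_three]
    simp [A, Matrix.charmatrix_apply, Matrix.diagonal, Matrix.one_apply, d, l]
    ring
  have hiff : l = -K ↔ (1 + ω ^ 2) * (K - σ) = 0 := by
    constructor <;> intro h <;> simp only [l] at * <;> nlinarith
  refine ⟨hcp, hiff, fun hK => ?_⟩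
  have hne : l ≠ -K := by
    intro h
    have := hiff.mp h
    have h1 : (1 : ℝ) + ω ^ 2 > 0 := by positivity
    have : K - σ = 0 := by
      rcases mul_eq_zero.mp this with h' | h'
      · linarith
      · exact h'
    exact hK (by linarith)
  have hXK : (X + C K : ℝ[X]) = X - C (-K) := by simp
  have h1 : ((X + C K : ℝ[X]) ^ 2) ≠ 0 := pow_ne_zero _ (by
    rw [hXK]; exact X_sub_C_ne_zero _)
  have h2 : (X - C l : ℝ[X]) ≠ 0 := X_sub_C_ne_zero _
  constructor
  · rw [hcp, rootMultiplicity_mul (mul_ne_zero h1 h2), hXK,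
      rootMultiplicity_X_sub_C_pow, rootMultiplicity_eq_zero]
    intro hroot
    simp [IsRoot] at hroot
    exact hne (by linarith)
  · rw [hcp, rootMultiplicity_mul (mul_ne_zero h1 h2),
      rootMultiplicity_eq_zero (by
        intro hroot
        simp [IsRoot] at hroot
        exact hne (by linarith)), Polynomial.rootMultiplicity_X_sub_C_self]
end

section
/- Let f, f̂ : ℝ → ℝ be twice differentiable with f > 0 and f̂ > 0 everywhere, let r₀, K₀ be real constants with 0 < K₀, and let r̂ : ℝ → ℝ be twice differentiable with r̂'(t) ≠ 0 for all t. Suppose (f'(t + r₀)/f(t + r₀))·r̂'(t) = f̂'(r̂(t))/f̂(r̂(t)) and r̂'(t)² + K₀/f̂(r̂(t))² = 1 for all t. Then f̂''(r̂(t))/f̂(r̂(t)) = f''(t + r₀)/f(t + r₀) for all t. -/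
/-!
Write `φ = f'/f (· + r₀)` and `ψ = f̂'/f̂ ∘ r̂`, so that the first-order relation reads `φ r̂' = ψ`.
Logarithmic derivatives satisfy the Riccati equation `(g'/g)' = g''/g - (g'/g)²`, and
differentiating the unit-speed relation gives `r̂' r̂'' = (1 - r̂'²) ψ r̂'`. Differentiating
`φ r̂' = ψ` and substituting both, every term in `φ` and `ψ` cancels, leaving
`(f̂''/f̂ - f''/f) r̂'² = 0`.
-/

theorem hasDerivAt_logDeriv {𝕜 : Type*} [NontriviallyNormedField 𝕜] {g : 𝕜 → 𝕜} {x : 𝕜}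
    (hg : DifferentiableAt 𝕜 g x) (hg' : DifferentiableAt 𝕜 (deriv g) x) (hx : g x ≠ 0) :
    HasDerivAt (logDeriv g) (deriv (deriv g) x / g x - logDeriv g x ^ 2) x :=
  (hg'.hasDerivAt.fun_div hg.hasDerivAt hx).congr_deriv (by rw [logDeriv_apply]; field_simp)

theorem mul_deriv_eq_of_sq_add_div_sq_eq_one {u B : ℝ → ℝ} {K u' B' t : ℝ}
    (h : ∀ s, u s ^ 2 + K / B s ^ 2 = 1) (hu : HasDerivAt u u' t) (hB : HasDerivAt B B' t)
    (hBt : B t ≠ 0) :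
    u t * u' = (1 - u t ^ 2) * (B' / B t) := by
  have hderiv := (hu.fun_pow 2).fun_add
    ((hasDerivAt_const t K).fun_div (hB.fun_pow 2) (pow_ne_zero 2 hBt))
  have hzero := hderiv.unique ((hasDerivAt_const t 1).congr_of_eventuallyEq (.of_forall h))
  have hK : K = (1 - u t ^ 2) * B t ^ 2 := by
    rw [← h t]; field_simp; ring
  have hcleared : B t * (u t * u' * B t) = B t * ((1 - u t ^ 2) * B') := by
    rw [hK] at hzero
    field_simp at hzero
    norm_num at hzero
    linear_combination hzero / 2
  rw [mul_div_assoc', eq_div_iff hBt]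
  exact mul_left_cancel₀ hBt hcleared

theorem warping_functions_second_order_general (f fh : ℝ → ℝ) (r₀ K₀ : ℝ) (rh : ℝ → ℝ)
    (hf : Differentiable ℝ f) (hf' : Differentiable ℝ (deriv f))
    (hfh : Differentiable ℝ fh) (hfh' : Differentiable ℝ (deriv fh))
    (hfpos : ∀ x, 0 < f x) (hfhpos : ∀ x, 0 < fh x)
    (hrh : Differentiable ℝ rh) (hrh' : Differentiable ℝ (deriv rh))
    (hne : ∀ t, deriv rh t ≠ 0)
    (h1 : ∀ t, (deriv f (t + r₀) / f (t + r₀)) * deriv rh t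
        = deriv fh (rh t) / fh (rh t))
    (h2 : ∀ t, (deriv rh t) ^ 2 + K₀ / (fh (rh t)) ^ 2 = 1) :
    ∀ t, deriv (deriv fh) (rh t) / fh (rh t)
        = deriv (deriv f) (t + r₀) / f (t + r₀) := by
  intro t
  simp only [← logDeriv_apply] at h1
  have hrh_t := (hrh t).hasDerivAt
  have hφ := (hasDerivAt_logDeriv (hf _) (hf' _) (hfpos (t + r₀)).ne').comp_add_const t r₀
  have hψ := (hasDerivAt_logDeriv (hfh _) (hfh' _) (hfhpos (rh t)).ne').comp t hrh_t
  have h1_deriv := (hφ.mul (hrh' t).hasDerivAt).unique (hψ.congr_of_eventuallyEq (.of_forall h1))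
  have hrh_accel := mul_deriv_eq_of_sq_add_div_sq_eq_one h2 (hrh' t).hasDerivAt
    ((hfh (rh t)).hasDerivAt.comp t hrh_t) (hfhpos (rh t)).ne'
  rw [mul_div_right_comm, ← logDeriv_apply] at hrh_accel
  have hsq : (deriv (deriv fh) (rh t) / fh (rh t) - deriv (deriv f) (t + r₀) / f (t + r₀))
      * deriv rh t ^ 2 = 0 := by
    linear_combination (-deriv rh t) * h1_deriv + logDeriv f (t + r₀) * hrh_accel
      + (-logDeriv f (t + r₀) * deriv rh t - logDeriv fh (rh t) * deriv rh t ^ 2) * h1 t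
  simpa [sub_eq_zero, hne t] using hsq

/-- Equation (eq:ss12:warping_functions:3): from the first-order relation between
the warping functions along the lifted geodesic together with the unit-speed
relation, the quotients `f̂''/f̂` and `f''/f` agree at corresponding parameters. -/
theorem warping_functions_second_order (f fh : ℝ → ℝ) (r₀ K₀ : ℝ) (rh : ℝ → ℝ)
    (hf : Differentiable ℝ f) (hf' : Differentiable ℝ (deriv f))
    (hfh : Differentiable ℝ fh) (hfh' : Differentiable ℝ (deriv fh))
    (hfpos : ∀ x, 0 < f x) (hfhpos : ∀ x, 0 < fh x)
    (hK : 0 < K₀)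
    (hrh : Differentiable ℝ rh) (hrh' : Differentiable ℝ (deriv rh))
    (hne : ∀ t, deriv rh t ≠ 0)
    (h1 : ∀ t, (deriv f (t + r₀) / f (t + r₀)) * deriv rh t
        = deriv fh (rh t) / fh (rh t))
    (h2 : ∀ t, (deriv rh t) ^ 2 + K₀ / (fh (rh t)) ^ 2 = 1) :
    ∀ t, deriv (deriv fh) (rh t) / fh (rh t)
        = deriv (deriv f) (t + r₀) / f (t + r₀) :=
  warping_functions_second_order_general f fh r₀ K₀ rh hf hf' hfh hfh' hfpos hfhpos hrh hrh' hne h1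
    h2
end
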